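/- arXiv:1806.07550 — 2 statements merged into one kernel-verified Lean document; each statement's English description precedes it below -/
import Mathlib

section
/- Let σ > 0, let X ~ N(0,1) and Δ ~ N(0,σ²) be independent real Gaussian random variables, and let sign denote the sign function with sign(t)=1 if t>0, sign(t)=-1 if t<0, sign(0)=0. Then P(sign(X + Δ) ≠ sign(X)) = arctan(σ)/π. -/
/-!
Write `Δ = σ Z` with `Z` standard normal and independent of `X`; the flip event is then a cone in
the `(X, Z)`-plane. The standard Gaussian density on `ℝ²` is radial, so in polar coordinates a
cone has probability equal to its angular measure divided by `2π`. Since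
`cos θ + σ sin θ = √(1 + σ²) cos (θ - arctan σ)`, the flip cone consists of the angles at which
`cos θ` and `cos (θ - arctan σ)` have different signs: two opposite sectors of width `arctan σ`.
-/

open MeasureTheory ProbabilityTheory Real Set
open scoped ENNReal

lemma Real.sign_monotone : Monotone Real.sign := by
  intro a b hab
  unfold Real.sign
  grind

lemma Real.measurable_sign : Measurable Real.sign :=
  Real.sign_monotone.measurable

lemma measurableSet_sign_ne_sign {α : Type*} [MeasurableSpace α] {f g : α → ℝ}
    (hf : Measurable f) (hg : Measurable g) :
    MeasurableSet {x | Real.sign (f x) ≠ Real.sign (g x)} :=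
  (measurableSet_eq_fun (Real.measurable_sign.comp hf) (Real.measurable_sign.comp hg)).compl

lemma Real.sign_mul_of_pos {r : ℝ} (hr : 0 < r) (a : ℝ) :
    Real.sign (r * a) = Real.sign a := by
  simp only [Real.sign, ← smul_eq_mul, smul_neg_iff_of_pos_left hr,
    smul_pos_iff_of_pos_left hr]

lemma Real.cos_add_mul_sin (σ θ : ℝ) :
    cos θ + σ * sin θ = √(1 + σ ^ 2) * cos (θ - arctan σ) := by
  have : 0 < √(1 + σ ^ 2) := by positivity
  rw [cos_sub, cos_arctan, sin_arctan]
  field_simp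

lemma Real.sign_cos {x : ℝ} (hx : |x| < 3 * π / 2) :
    Real.sign (cos x) = Real.sign (π / 2 - |x|) := by
  rw [← cos_abs]
  rcases lt_trichotomy |x| (π / 2) with h | h | h
  · rw [sign_of_pos (cos_pos_of_mem_Ioo ⟨by linarith [abs_nonneg x, pi_pos], h⟩),
      sign_of_pos (by linarith)]
  · rw [h, cos_pi_div_two, sub_self]
  · rw [sign_of_neg (cos_neg_of_pi_div_two_lt_of_lt h (by linarith)), sign_of_neg (by linarith)]

lemma sign_sub_abs_sub_ne_sign_sub_abs_iff {a φ θ : ℝ} (hφ : 0 < φ) (hφa : φ < 2 * a) :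
    Real.sign (a - |θ - φ|) ≠ Real.sign (a - |θ|) ↔
      θ ∈ Icc (-a) (φ - a) ∪ Icc a (φ + a) := by
  unfold Real.sign
  grind

lemma sign_cos_add_mul_sin_ne_sign_cos_iff {σ θ : ℝ} (hσ : 0 < σ) (hθ : θ ∈ Ioo (-π) π) :
    Real.sign (cos θ + σ * sin θ) ≠ Real.sign (cos θ) ↔
      θ ∈ Icc (-(π / 2)) (arctan σ - π / 2) ∪ Icc (π / 2) (arctan σ + π / 2) := by
  have hφ : 0 < arctan σ := arctan_pos.2 hσ
  have hφπ : arctan σ < π / 2 := arctan_lt_pi_div_two σ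
  obtain ⟨hθ₀, hθ₁⟩ := hθ
  rw [cos_add_mul_sin, sign_mul_of_pos (by positivity),
    sign_cos (abs_lt.2 ⟨by linarith, by linarith⟩),
    sign_cos (abs_lt.2 ⟨by linarith, by linarith⟩)]
  exact sign_sub_abs_sub_ne_sign_sub_abs_iff hφ (by linarith)

lemma ProbabilityTheory.IndepFun.measure_preimage_prodMk_eq_prod {Ω α β : Type*}
    [MeasurableSpace Ω] [MeasurableSpace α] [MeasurableSpace β] {μ : Measure Ω}
    [IsFiniteMeasure μ] {X : Ω → α} {Y : Ω → β}
    (hXY : IndepFun X Y μ) (hX : AEMeasurable X μ) (hY : AEMeasurable Y μ) {s : Set (α × β)}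
    (hs : MeasurableSet s) :
    μ ((fun ω => (X ω, Y ω)) ⁻¹' s) = (μ.map X).prod (μ.map Y) s := by
  rw [← (indepFun_iff_map_prod_eq_prod_map_map hX hY).1 hXY,
    Measure.map_apply_of_aemeasurable (hX.prodMk hY) hs]

lemma gaussianReal_prod_gaussianReal :
    (gaussianReal 0 1).prod (gaussianReal 0 1)
      = volume.withDensity (fun p : ℝ × ℝ => gaussianPDF 0 1 p.1 * gaussianPDF 0 1 p.2) := by
  rw [gaussianReal_of_var_ne_zero 0 one_ne_zero, Measure.volume_eq_prod,
    prod_withDensity (measurable_gaussianPDF 0 1) (measurable_gaussianPDF 0 1)]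

lemma gaussianReal_prod_gaussianReal_sq_apply (σ : ℝ) {s : Set (ℝ × ℝ)}
    (hs : MeasurableSet s) :
    (gaussianReal 0 1).prod (gaussianReal 0 ⟨σ ^ 2, sq_nonneg σ⟩) s
      = (gaussianReal 0 1).prod (gaussianReal 0 1) {p | (p.1, σ * p.2) ∈ s} := by
  have hσ : gaussianReal 0 ⟨σ ^ 2, sq_nonneg σ⟩ = (gaussianReal 0 1).map (σ * ·) := by
    rw [gaussianReal_map_const_mul, mul_zero, mul_one]
    rfl
  rw [hσ]
  conv_lhs => rw [← Measure.map_id (μ := gaussianReal 0 1)]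
  rw [Measure.map_prod_map _ _ measurable_id (measurable_const_mul σ), Measure.map_id,
    Measure.map_apply (by fun_prop) hs]
  rfl

lemma gaussianPDFReal_mul_gaussianPDFReal_polarCoord_symm (p : ℝ × ℝ) :
    gaussianPDFReal 0 1 (polarCoord.symm p).1 * gaussianPDFReal 0 1 (polarCoord.symm p).2
      = gaussianPDFReal 0 1 p.1 * gaussianPDFReal 0 1 0 := by
  simp only [gaussianPDFReal, polarCoord_symm_apply, NNReal.coe_one, sub_zero, mul_one]
  rw [mul_mul_mul_comm, mul_mul_mul_comm _ (rexp _), ← exp_add, ← exp_add]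
  congr 2
  linear_combination (-(p.1 ^ 2) / 2) * sin_sq_add_cos_sq p.2

lemma gaussianPDF_mul_gaussianPDF_polarCoord_symm (p : ℝ × ℝ) :
    gaussianPDF 0 1 (polarCoord.symm p).1 * gaussianPDF 0 1 (polarCoord.symm p).2
      = gaussianPDF 0 1 p.1 * gaussianPDF 0 1 0 := by
  simp only [gaussianPDF, ← ENNReal.ofReal_mul (gaussianPDFReal_nonneg 0 1 _),
    gaussianPDFReal_mul_gaussianPDFReal_polarCoord_symm]

lemma polarCoord_symm_eq_smul (p : ℝ × ℝ) : polarCoord.symm p = p.1 • (cos p.2, sin p.2) := by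
  simp [polarCoord_symm_apply]

lemma gaussianReal_prod_cone_eq_mul {W : Set (ℝ × ℝ)} (hW : MeasurableSet W)
    (hcone : ∀ r : ℝ, 0 < r → ∀ p, r • p ∈ W ↔ p ∈ W) :
    (gaussianReal 0 1).prod (gaussianReal 0 1) W
      = (∫⁻ r in Ioi 0, ENNReal.ofReal r * (gaussianPDF 0 1 r * gaussianPDF 0 1 0))
        * volume ({θ | (cos θ, sin θ) ∈ W} ∩ Ioo (-π) π) := by
  set A : Set ℝ := {θ | (cos θ, sin θ) ∈ W}
  have hA : MeasurableSet A := hW.preimage (by fun_prop)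
  have hpolar : ∀ q ∈ polarCoord.target, ENNReal.ofReal q.1 •
        W.indicator (fun p => gaussianPDF 0 1 p.1 * gaussianPDF 0 1 p.2) (polarCoord.symm q)
      = ENNReal.ofReal q.1 * (gaussianPDF 0 1 q.1 * gaussianPDF 0 1 0) * A.indicator 1 q.2 := by
    rintro q ⟨hr, -⟩
    have hmem : polarCoord.symm q ∈ W ↔ q.2 ∈ A := by
      rw [polarCoord_symm_eq_smul]; exact hcone q.1 hr _
    by_cases hq : q.2 ∈ A
    · rw [indicator_of_mem (hmem.2 hq), indicator_of_mem hq, Pi.one_apply, mul_one, smul_eq_mul,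
        gaussianPDF_mul_gaussianPDF_polarCoord_symm]
    · rw [indicator_of_notMem (mt hmem.1 hq), indicator_of_notMem hq, smul_zero, mul_zero]
  rw [gaussianReal_prod_gaussianReal, withDensity_apply _ hW, ← lintegral_indicator hW,
    ← lintegral_comp_polarCoord_symm,
    setLIntegral_congr_fun polarCoord.open_target.measurableSet hpolar, polarCoord_target,
    Measure.volume_eq_prod, ← Measure.prod_restrict,
    lintegral_prod_mul
      (f := fun r => ENNReal.ofReal r * (gaussianPDF 0 1 r * gaussianPDF 0 1 0))
      (g := A.indicator 1) (by fun_prop) (aemeasurable_one.indicator hA),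
    lintegral_indicator_one hA, Measure.restrict_apply hA]

lemma gaussianReal_prod_cone {W : Set (ℝ × ℝ)} (hW : MeasurableSet W)
    (hcone : ∀ r : ℝ, 0 < r → ∀ p, r • p ∈ W ↔ p ∈ W) :
    (gaussianReal 0 1).prod (gaussianReal 0 1) W
      = volume ({θ | (cos θ, sin θ) ∈ W} ∩ Ioo (-π) π) / ENNReal.ofReal (2 * π) := by
  have hvol : volume (Ioo (-π) π) = ENNReal.ofReal (2 * π) := by
    rw [volume_Ioo]; ring_nf
  have h2π : ENNReal.ofReal (2 * π) ≠ 0 := by simp [pi_pos]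
  -- The whole plane is a cone of total mass one, which determines the radial integral.
  have hradial := gaussianReal_prod_cone_eq_mul MeasurableSet.univ (fun _ _ _ => Iff.rfl)
  simp only [measure_univ, mem_univ, ofPred_true, univ_inter, hvol] at hradial
  rw [gaussianReal_prod_cone_eq_mul hW hcone, ENNReal.eq_div_iff h2π ENNReal.ofReal_ne_top,
    ← mul_assoc, mul_comm _ (∫⁻ _ in _, _), ← hradial, one_mul]

lemma smul_mem_sign_add_mul_ne_sign_iff (σ : ℝ) {r : ℝ} (hr : 0 < r) (p : ℝ × ℝ) :
    r • p ∈ {p : ℝ × ℝ | Real.sign (p.1 + σ * p.2) ≠ Real.sign p.1} ↔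
      p ∈ {p : ℝ × ℝ | Real.sign (p.1 + σ * p.2) ≠ Real.sign p.1} := by
  simp only [mem_ofPred_eq, Prod.smul_fst, Prod.smul_snd, smul_eq_mul, mul_left_comm σ r,
    ← mul_add, sign_mul_of_pos hr]

lemma volume_sign_cos_add_mul_sin_ne_sign_cos {σ : ℝ} (hσ : 0 < σ) :
    volume ({θ | Real.sign (cos θ + σ * sin θ) ≠ Real.sign (cos θ)} ∩ Ioo (-π) π)
      = ENNReal.ofReal (2 * arctan σ) := by
  have hφ : 0 < arctan σ := arctan_pos.2 hσ
  have hφπ : arctan σ < π / 2 := arctan_lt_pi_div_two σ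
  have hangles : {θ | Real.sign (cos θ + σ * sin θ) ≠ Real.sign (cos θ)} ∩ Ioo (-π) π
      = Icc (-(π / 2)) (arctan σ - π / 2) ∪ Icc (π / 2) (arctan σ + π / 2) := by
    ext θ
    refine ⟨fun ⟨hflip, hθ⟩ => (sign_cos_add_mul_sin_ne_sign_cos_iff hσ hθ).1 hflip, fun h => ?_⟩
    have hθ : θ ∈ Ioo (-π) π := by
      rcases h with ⟨h₁, h₂⟩ | ⟨h₁, h₂⟩ <;> constructor <;> linarith [pi_pos]
    exact ⟨(sign_cos_add_mul_sin_ne_sign_cos_iff hσ hθ).2 h, hθ⟩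
  have hdisj : Disjoint (Icc (-(π / 2)) (arctan σ - π / 2)) (Icc (π / 2) (arctan σ + π / 2)) :=
    Set.disjoint_left.2 fun _ h₁ h₂ => by linarith [h₁.2, h₂.1]
  rw [hangles, measure_union hdisj measurableSet_Icc, volume_Icc, volume_Icc,
    ← ENNReal.ofReal_add (by linarith) (by linarith)]
  ring_nf

lemma gaussianReal_prod_sign_add_mul_ne_sign {σ : ℝ} (hσ : 0 < σ) :
    (gaussianReal 0 1).prod (gaussianReal 0 1)
        {p : ℝ × ℝ | Real.sign (p.1 + σ * p.2) ≠ Real.sign p.1}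
      = ENNReal.ofReal (arctan σ / π) := by
  rw [gaussianReal_prod_cone (measurableSet_sign_ne_sign (by fun_prop) (by fun_prop))
      (fun _ hr => smul_mem_sign_add_mul_ne_sign_iff σ hr)]
  simp only [mem_ofPred_eq]
  rw [volume_sign_cos_add_mul_sin_ne_sign_cos hσ, ← ENNReal.ofReal_div_of_pos (by positivity),
    mul_div_mul_left _ _ two_ne_zero]

/-- If `X ~ N(0,1)` and `Δ ~ N(0,σ²)` are independent (with `σ > 0`), then the probability
that the binarized activation flips under the perturbation `Δ`, i.e.
`P(sign(X + Δ) ≠ sign X)`, equals `arctan σ / π`.  Here `Real.sign t` is `1` if `t > 0`,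
`-1` if `t < 0` and `0` if `t = 0`. -/
theorem prob_sign_flip
    {Ω : Type*} [MeasurableSpace Ω] (μ : Measure Ω) [IsProbabilityMeasure μ]
    (σ : ℝ) (hσ : 0 < σ) (X Δ : Ω → ℝ)
    (hX : Measure.map X μ = gaussianReal 0 1)
    (hΔ : Measure.map Δ μ = gaussianReal 0 ⟨σ ^ 2, sq_nonneg σ⟩)
    (hXΔ : IndepFun X Δ μ) :
    μ {ω | Real.sign (X ω + Δ ω) ≠ Real.sign (X ω)}
      = ENNReal.ofReal (Real.arctan σ / Real.pi) := by
  have hXm : AEMeasurable X μ :=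
    .of_map_ne_zero (hX ▸ (instIsProbabilityMeasureGaussianReal _ _).ne_zero)
  have hΔm : AEMeasurable Δ μ :=
    .of_map_ne_zero (hΔ ▸ (instIsProbabilityMeasureGaussianReal _ _).ne_zero)
  have hflip : MeasurableSet {p : ℝ × ℝ | Real.sign (p.1 + p.2) ≠ Real.sign p.1} :=
    measurableSet_sign_ne_sign (by fun_prop) (by fun_prop)
  calc μ {ω | Real.sign (X ω + Δ ω) ≠ Real.sign (X ω)}
      = (μ.map X).prod (μ.map Δ) {p : ℝ × ℝ | Real.sign (p.1 + p.2) ≠ Real.sign p.1} :=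
        hXΔ.measure_preimage_prodMk_eq_prod hXm hΔm hflip
    _ = (gaussianReal 0 1).prod (gaussianReal 0 1)
          {p : ℝ × ℝ | Real.sign (p.1 + σ * p.2) ≠ Real.sign p.1} := by
        rw [hX, hΔ, gaussianReal_prod_gaussianReal_sq_apply σ hflip]
        rfl
    _ = ENNReal.ofReal (arctan σ / π) := gaussianReal_prod_sign_add_mul_ne_sign hσ
end

section
/- Let n ≥ 1, σ_w > 0, σ > 0. Let w₁,…,w_n be i.i.d. N(0,σ_w²), x₁,…,x_n be i.i.d. N(0,1), and Δ₁,…,Δ_n be i.i.d. N(0,σ²), with the three families mutually independent. Set γ_i = sign(x_i + Δ_i) − sign(x_i). Then Var(∑_{i=1}^n sign(w_i)·γ_i) = n·(4/π)·arctan(σ). -/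
/-!
Each summand `sign wᵢ · γᵢ` has mean zero, because `sign wᵢ` is centred and independent of `γᵢ`,
and, since `(sign wᵢ)² = 1` almost surely, its second moment is `E[γᵢ²]`. Writing `Δᵢ = σ z` with
`(xᵢ, z)` a standard Gaussian vector of `ℝ²`, the integrand `(sign (x + σ z) - sign x)²` is
invariant under positive scaling, so in polar coordinates only the angle matters:
`cos θ + σ sin θ = √(1 + σ²) cos (θ - arctan σ)` has a sign different from that of `cos θ` on a set
of angles of length `2 arctan σ`, whence `E[γᵢ²] = 4 · 2 arctan σ / (2π)`. Summands with different
indices are independent, so their variances add up.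
-/

open MeasureTheory ProbabilityTheory Real Set
open scoped NNReal

namespace Real

@[fun_prop]
lemma measurable_sign_s10 : Measurable Real.sign :=
  Measurable.ite (measurableSet_lt measurable_id measurable_const) measurable_const
    (Measurable.ite (measurableSet_lt measurable_const measurable_id) measurable_const
      measurable_const)

lemma sign_mul_of_pos_s10 {r : ℝ} (hr : 0 < r) (a : ℝ) : sign (r * a) = sign a := by
  rcases lt_trichotomy a 0 with ha | rfl | ha
  · rw [sign_of_neg ha, sign_of_neg (mul_neg_of_pos_of_neg hr ha)]
  · simp
  · rw [sign_of_pos ha, sign_of_pos (mul_pos hr ha)]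

lemma sign_sq_of_ne_zero {a : ℝ} (ha : a ≠ 0) : sign a ^ 2 = 1 := by
  rcases sign_apply_eq_of_ne_zero a ha with h | h <;> simp [h]

lemma sq_sign_sub_sign_le (a b : ℝ) : (sign a - sign b) ^ 2 ≤ 4 := by
  rcases sign_apply_eq a with h | h | h <;> rcases sign_apply_eq b with h' | h' | h' <;>
    norm_num [h, h']

lemma abs_sign_mul_sign_sub_sign_le (a b c : ℝ) : |sign a * (sign b - sign c)| ≤ 2 := by
  rcases sign_apply_eq a with h | h | h <;> rcases sign_apply_eq b with h' | h' | h' <;>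
    rcases sign_apply_eq c with h'' | h'' | h'' <;> norm_num [h, h', h'']

lemma cos_add_mul_sin_eq (σ θ : ℝ) :
    cos θ + σ * sin θ = √(1 + σ ^ 2) * cos (θ - arctan σ) := by
  rw [cos_sub, cos_arctan, sin_arctan]
  field_simp

lemma periodic_sq_sign_cos_add_mul_sin_sub_sign_cos (σ : ℝ) :
    Function.Periodic (fun θ => (sign (cos θ + σ * sin θ) - sign (cos θ)) ^ 2) π := by
  intro θ
  simp only [cos_add_pi, sin_add_pi, mul_neg, ← neg_add, sign_neg]
  ring

lemma intervalIntegrable_sq_sign_cos_add_mul_sin_sub_sign_cos (σ a b : ℝ) :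
    IntervalIntegrable (fun θ => (sign (cos θ + σ * sin θ) - sign (cos θ)) ^ 2) volume a b :=
  (intervalIntegrable_const (c := (4 : ℝ))).mono_fun (by fun_prop) <| ae_of_all _ fun θ => by
    simpa using sq_sign_sub_sign_le (cos θ + σ * sin θ) (cos θ)

lemma integral_sq_sign_cos_add_mul_sin_sub_sign_cos_pi_div_two {σ : ℝ} (hσ : 0 < σ) :
    ∫ θ in (-(π / 2))..(π / 2), (sign (cos θ + σ * sin θ) - sign (cos θ)) ^ 2 =
      4 * arctan σ := by
  set α := arctan σ
  have hα : 0 < α := arctan_pos.2 hσ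
  have hαπ : α < π / 2 := arctan_lt_pi_div_two σ
  have hsign (θ : ℝ) : sign (cos θ + σ * sin θ) = sign (cos (θ - α)) := by
    rw [cos_add_mul_sin_eq, sign_mul_of_pos_s10 (by positivity)]
  have hflip : EqOn (fun θ => (sign (cos θ + σ * sin θ) - sign (cos θ)) ^ 2) (fun _ => 4)
      (Ioo (-(π / 2)) (α - π / 2)) := by
    intro θ hθ
    have hcos : 0 < cos θ := cos_pos_of_mem_Ioo ⟨hθ.1, by linarith [hθ.2]⟩
    have hcos_sub : cos (θ - α) < 0 := by
      rw [← cos_neg]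
      exact cos_neg_of_pi_div_two_lt_of_lt (by linarith [hθ.2]) (by linarith [hθ.1])
    simp only [hsign, sign_of_pos hcos, sign_of_neg hcos_sub]
    norm_num
  have hkeep : EqOn (fun θ => (sign (cos θ + σ * sin θ) - sign (cos θ)) ^ 2) (fun _ => 0)
      (Ioo (α - π / 2) (π / 2)) := by
    intro θ hθ
    have hcos : 0 < cos θ := cos_pos_of_mem_Ioo ⟨by linarith [hθ.1], hθ.2⟩
    have hcos_sub : 0 < cos (θ - α) :=
      cos_pos_of_mem_Ioo ⟨by linarith [hθ.1], by linarith [hθ.2]⟩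
    simp only [hsign, sign_of_pos hcos, sign_of_pos hcos_sub]
    norm_num
  rw [← intervalIntegral.integral_add_adjacent_intervals
      (intervalIntegrable_sq_sign_cos_add_mul_sin_sub_sign_cos σ _ (α - π / 2))
      (intervalIntegrable_sq_sign_cos_add_mul_sin_sub_sign_cos σ _ _),
    intervalIntegral.integral_congr_Ioo_of_le (by linarith) hflip,
    intervalIntegral.integral_congr_Ioo_of_le (by linarith) hkeep,
    intervalIntegral.integral_const, intervalIntegral.integral_const, smul_eq_mul, smul_zero]
  ring

lemma integral_sq_sign_cos_add_mul_sin_sub_sign_cos {σ : ℝ} (hσ : 0 < σ) :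
    ∫ θ in (-π)..π, (sign (cos θ + σ * sin θ) - sign (cos θ)) ^ 2 = 8 * arctan σ := by
  have hper := periodic_sq_sign_cos_add_mul_sin_sub_sign_cos σ
  have h := hper.intervalIntegral_add_zsmul_eq 2 (-π)
    (intervalIntegrable_sq_sign_cos_add_mul_sin_sub_sign_cos σ)
  rw [hper.intervalIntegral_add_eq (-π) (-(π / 2)), two_zsmul, two_zsmul, neg_add_cancel_left,
    neg_add_eq_sub, sub_half, integral_sq_sign_cos_add_mul_sin_sub_sign_cos_pi_div_two hσ] at h
  rw [h]
  ring

end Real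

lemma integral_Ioi_mul_exp_neg_sq_div_two : ∫ r in Ioi (0 : ℝ), r * exp (-r ^ 2 / 2) = 1 := by
  have h := integral_rpow_mul_exp_neg_mul_rpow (p := 2) (q := 1) (b := 1 / 2)
    (by norm_num) (by norm_num) (by norm_num)
  norm_num at h
  rw [← h]
  refine setIntegral_congr_fun measurableSet_Ioi fun r _ => ?_
  ring_nf

namespace ProbabilityTheory

lemma gaussianPDFReal_zero_one_mul (a b : ℝ) :
    gaussianPDFReal 0 1 a * gaussianPDFReal 0 1 b = (2 * π)⁻¹ * exp (-(a ^ 2 + b ^ 2) / 2) := by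
  simp only [gaussianPDFReal, NNReal.coe_one, mul_one, sub_zero]
  rw [mul_mul_mul_comm, ← exp_add, ← mul_inv, mul_self_sqrt (by positivity)]
  ring_nf

lemma integral_gaussianReal_prod_of_homogeneous {E : Type*} [NormedAddCommGroup E]
    [NormedSpace ℝ E] {g : ℝ × ℝ → E} (hg : ∀ r : ℝ, 0 < r → ∀ p, g (r • p) = g p) :
    ∫ p, g p ∂(gaussianReal 0 1).prod (gaussianReal 0 1) =
      (2 * π)⁻¹ • ∫ θ in (-π)..π, g (cos θ, sin θ) := by
  have hprod : (gaussianReal 0 1).prod (gaussianReal 0 1) =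
      volume.withDensity fun p => gaussianPDF 0 1 p.1 * gaussianPDF 0 1 p.2 := by
    rw [gaussianReal_of_var_ne_zero _ one_ne_zero, prod_withDensity (measurable_gaussianPDF _ _)
      (measurable_gaussianPDF _ _), Measure.volume_eq_prod]
  have hpolar : ∀ p ∈ polarCoord.target,
      p.1 • ((gaussianPDF 0 1 (polarCoord.symm p).1 *
          gaussianPDF 0 1 (polarCoord.symm p).2).toReal • g (polarCoord.symm p)) =
        (p.1 * exp (-p.1 ^ 2 / 2)) • ((2 * π)⁻¹ • g (cos p.2, sin p.2)) := by
    rintro ⟨r, θ⟩ ⟨hr, -⟩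
    have hr : (0 : ℝ) < r := hr
    have hsymm : polarCoord.symm (r, θ) = r • (cos θ, sin θ) := by
      simp [polarCoord_symm_apply]
    rw [hsymm, hg r hr, ENNReal.toReal_mul, toReal_gaussianPDF, toReal_gaussianPDF]
    simp only [Prod.smul_fst, Prod.smul_snd, smul_eq_mul, gaussianPDFReal_zero_one_mul]
    rw [smul_smul, smul_smul]
    congr 1
    rw [mul_pow, mul_pow, ← mul_add, cos_sq_add_sin_sq, mul_one]
    ring
  rw [hprod, integral_withDensity_eq_integral_toReal_smul (by fun_prop)
      (ae_of_all _ fun _ => ENNReal.mul_lt_top gaussianPDF_lt_top gaussianPDF_lt_top),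
    ← integral_comp_polarCoord_symm, setIntegral_congr_fun polarCoord.open_target.measurableSet
      hpolar, polarCoord_target, Measure.volume_eq_prod, ← Measure.prod_restrict,
    integral_prod_smul (fun r => r * exp (-r ^ 2 / 2)) fun θ => (2 * π)⁻¹ • g (cos θ, sin θ),
    integral_Ioi_mul_exp_neg_sq_div_two, one_smul, integral_smul,
    intervalIntegral.integral_of_le (by linarith [pi_pos]), integral_Ioc_eq_integral_Ioo]

lemma integral_sq_sign_add_sub_sign_gaussianReal_prod {σ : ℝ} (hσ : 0 < σ) :
    ∫ p, (sign (p.1 + p.2) - sign p.1) ^ 2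
        ∂(gaussianReal 0 1).prod (gaussianReal 0 ⟨σ ^ 2, sq_nonneg σ⟩) =
      4 / π * arctan σ := by
  have hscale : gaussianReal 0 ⟨σ ^ 2, sq_nonneg σ⟩ = (gaussianReal 0 1).map (σ * ·) := by
    rw [gaussianReal_map_const_mul, mul_zero, mul_one]
    rfl
  have hhom : ∀ r : ℝ, 0 < r → ∀ p : ℝ × ℝ,
      (sign ((r • p).1 + σ * (r • p).2) - sign (r • p).1) ^ 2 =
        (sign (p.1 + σ * p.2) - sign p.1) ^ 2 := by
    intro r hr p
    simp only [Prod.smul_fst, Prod.smul_snd, smul_eq_mul, mul_left_comm σ r,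
      ← mul_add, sign_mul_of_pos_s10 hr]
  rw [hscale, ← Measure.map_id (μ := gaussianReal 0 1), Measure.map_prod_map _ _ measurable_id
      (measurable_const_mul σ), Measure.map_id, integral_map (by fun_prop) (by fun_prop)]
  simp only [Prod.map_fst, Prod.map_snd, id]
  rw [integral_gaussianReal_prod_of_homogeneous hhom,
    integral_sq_sign_cos_add_mul_sin_sub_sign_cos hσ, smul_eq_mul]
  field_simp
  ring

lemma integral_sign_gaussianReal (v : ℝ≥0) : ∫ t, sign t ∂gaussianReal 0 v = 0 := by
  have h := integral_map (μ := gaussianReal 0 v) (φ := fun t => -t) (by fun_prop)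
    measurable_sign_s10.aestronglyMeasurable
  rw [gaussianReal_map_neg, neg_zero] at h
  simp only [sign_neg, integral_neg] at h
  linarith

lemma variance_sign_mul_sign_add_sub_sign {Ω : Type*} [MeasurableSpace Ω] {μ : Measure Ω}
    [IsProbabilityMeasure μ] {W X D : Ω → ℝ} {v : ℝ≥0} {σ : ℝ} (hv : v ≠ 0) (hσ : 0 < σ)
    (hW : HasLaw W (gaussianReal 0 v) μ) (hX : HasLaw X (gaussianReal 0 1) μ)
    (hD : HasLaw D (gaussianReal 0 ⟨σ ^ 2, sq_nonneg σ⟩) μ)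
    (hWXD : IndepFun W (fun ω => (X ω, D ω)) μ) (hXD : IndepFun X D μ) :
    Var[fun ω => sign (W ω) * (sign (X ω + D ω) - sign (X ω)); μ] = 4 / π * arctan σ := by
  have hmean : μ[fun ω => sign (W ω) * (sign (X ω + D ω) - sign (X ω))] = 0 := by
    have hind : IndepFun (fun ω => sign (W ω)) (fun ω => sign (X ω + D ω) - sign (X ω)) μ :=
      hWXD.comp measurable_sign_s10 (ψ := fun p : ℝ × ℝ => sign (p.1 + p.2) - sign p.1) (by fun_prop)
    rw [hind.integral_fun_mul_eq_mul_integral (by fun_prop : AEMeasurable _ μ).aestronglyMeasurable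
        (by fun_prop : AEMeasurable _ μ).aestronglyMeasurable,
      ← Function.comp_def, hW.integral_comp (by fun_prop), integral_sign_gaussianReal, zero_mul]
  have hW_ne : ∀ᵐ ω ∂μ, W ω ≠ 0 := by
    have := nullSingletonClass_gaussianReal (μ := 0) hv
    rw [hW.ae_iff (p := (· ≠ 0)) (measurableSet_setOfPred.1 (measurableSet_singleton 0).compl)]
    exact measure_eq_zero_iff_ae_notMem.1 (measure_singleton 0)
  rw [variance_of_integral_eq_zero (by fun_prop) hmean]
  calc ∫ ω, (sign (W ω) * (sign (X ω + D ω) - sign (X ω))) ^ 2 ∂μ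
      = ∫ ω, (sign (X ω + D ω) - sign (X ω)) ^ 2 ∂μ := by
        refine integral_congr_ae ?_
        filter_upwards [hW_ne] with ω hω
        rw [mul_pow, sign_sq_of_ne_zero hω, one_mul]
    _ = 4 / π * arctan σ := by
        rw [← integral_sq_sign_add_sub_sign_gaussianReal_prod hσ]
        exact (hXD.hasLaw_prod hX hD).integral_comp
          (f := fun p : ℝ × ℝ => (sign (p.1 + p.2) - sign p.1) ^ 2) (by fun_prop)

lemma hasLaw_of_map_eq {Ω 𝓧 : Type*} [MeasurableSpace Ω] [MeasurableSpace 𝓧] {μ : Measure Ω}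
    {X : Ω → 𝓧} {ν : Measure 𝓧} [NeZero ν] (h : μ.map X = ν) : HasLaw X ν μ :=
  ⟨.of_map_ne_zero (h ▸ NeZero.ne ν), h⟩

lemma iIndepFun.indepFun_sumElim₃ {Ω ι β : Type*} [MeasurableSpace Ω] [MeasurableSpace β]
    {μ : Measure Ω} {f g h : ι → Ω → β} (hind : iIndepFun (Sum.elim f (Sum.elim g h)) μ)
    (hmeas : ∀ k, AEMeasurable (Sum.elim f (Sum.elim g h) k) μ) {i j : ι} (hij : i ≠ j) :
    IndepFun (fun ω => (f i ω, g i ω, h i ω)) (fun ω => (f j ω, g j ω, h j ω)) μ := by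
  classical
  let S (k : ι) : Finset (ι ⊕ ι ⊕ ι) := {.inl k, .inr (.inl k), .inr (.inr k)}
  have hdisj : Disjoint (S i) (S j) := by
    simp [S, Finset.disjoint_left, hij]
  let pick (k : ι) (v : S k → β) : β × β × β :=
    (v ⟨.inl k, by simp [S]⟩, v ⟨.inr (.inl k), by simp [S]⟩, v ⟨.inr (.inr k), by simp [S]⟩)
  have hpick (k : ι) : Measurable (pick k) := by fun_prop
  exact (hind.indepFun_finset₀ (S i) (S j) hdisj hmeas).comp (hpick i) (hpick j)

end ProbabilityTheory

theorem variance_fully_binarized_output_change_general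
    {Ω : Type*} [MeasurableSpace Ω] (μ : Measure Ω) [IsProbabilityMeasure μ]
    (n : ℕ) (σw σ : ℝ) (hσw : 0 < σw) (hσ : 0 < σ)
    (w x Δ : Fin n → Ω → ℝ)
    (hw : ∀ i, Measure.map (w i) μ = gaussianReal 0 ⟨σw ^ 2, sq_nonneg σw⟩)
    (hx : ∀ i, Measure.map (x i) μ = gaussianReal 0 1)
    (hΔ : ∀ i, Measure.map (Δ i) μ = gaussianReal 0 ⟨σ ^ 2, sq_nonneg σ⟩)
    (hindep : iIndepFun (Sum.elim w (Sum.elim x Δ)) μ) :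
    variance
        (fun ω =>
          ∑ i, Real.sign (w i ω) * (Real.sign (x i ω + Δ i ω) - Real.sign (x i ω))) μ
      = n * ((4 / Real.pi) * Real.arctan σ) := by
  -- Naming the variances lets instance search see `gaussianReal 0 vw` as a probability measure.
  set vw : ℝ≥0 := ⟨σw ^ 2, sq_nonneg σw⟩
  set vΔ : ℝ≥0 := ⟨σ ^ 2, sq_nonneg σ⟩
  have hvw : vw ≠ 0 := NNReal.coe_ne_zero.1 (pow_ne_zero 2 hσw.ne')
  have hwLaw i := hasLaw_of_map_eq (hw i)
  have hxLaw i := hasLaw_of_map_eq (hx i)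
  have hΔLaw i := hasLaw_of_map_eq (hΔ i)
  have hmeas : ∀ k, AEMeasurable (Sum.elim w (Sum.elim x Δ) k) μ := by
    rintro (i | i | i)
    exacts [(hwLaw i).aemeasurable, (hxLaw i).aemeasurable, (hΔLaw i).aemeasurable]
  let F (t : ℝ × ℝ × ℝ) : ℝ := sign t.1 * (sign (t.2.1 + t.2.2) - sign t.2.1)
  have hF : Measurable F := by fun_prop
  let Y (i : Fin n) (ω : Ω) : ℝ := F (w i ω, x i ω, Δ i ω)
  have hY : ∀ i ∈ Finset.univ, MemLp (Y i) 2 μ := fun i _ =>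
    .of_bound (hF.comp_aemeasurable (by fun_prop)).aestronglyMeasurable 2
      (ae_of_all _ fun ω => abs_sign_mul_sign_sub_sign_le _ _ _)
  have hindY : Set.Pairwise (Finset.univ : Finset (Fin n)) fun i j => IndepFun (Y i) (Y j) μ :=
    fun i _ j _ hij => (hindep.indepFun_sumElim₃ hmeas hij).comp hF hF
  have hvarY (i : Fin n) : Var[Y i; μ] = 4 / π * arctan σ :=
    variance_sign_mul_sign_add_sub_sign hvw hσ (hwLaw i) (hxLaw i) (hΔLaw i)
      (hindep.indepFun_prodMk₀ hmeas (.inr (.inl i)) (.inr (.inr i)) (.inl i) (by simp)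
        (by simp)).symm
      (hindep.indepFun (i := .inr (.inl i)) (j := .inr (.inr i)) (by simp))
  have hsum : (fun ω => ∑ i, sign (w i ω) * (sign (x i ω + Δ i ω) - sign (x i ω))) = ∑ i, Y i := by
    ext ω
    simp [Y, F]
  rw [hsum, IndepFun.variance_sum hY hindY, Finset.sum_congr rfl fun i _ => hvarY i]
  simp

/-- If `w₁,…,w_n` are i.i.d. `N(0,σ_w²)`, `x₁,…,x_n` are i.i.d. `N(0,1)` and `Δ₁,…,Δ_n`
are i.i.d. `N(0,σ²)`, the three families mutually independent, and
`γ_i = sign(x_i + Δ_i) − sign x_i`, then `Var(∑ i, sign(w_i)·γ_i) = n·(4/π)·arctan σ`.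
This is the output-change variance of one neuron of a one-layer fully binarized network
(both weights and activations binarized). -/
theorem variance_fully_binarized_output_change
    {Ω : Type*} [MeasurableSpace Ω] (μ : Measure Ω) [IsProbabilityMeasure μ]
    (n : ℕ) (hn : 1 ≤ n) (σw σ : ℝ) (hσw : 0 < σw) (hσ : 0 < σ)
    (w x Δ : Fin n → Ω → ℝ)
    (hw : ∀ i, Measure.map (w i) μ = gaussianReal 0 ⟨σw ^ 2, sq_nonneg σw⟩)
    (hx : ∀ i, Measure.map (x i) μ = gaussianReal 0 1)
    (hΔ : ∀ i, Measure.map (Δ i) μ = gaussianReal 0 ⟨σ ^ 2, sq_nonneg σ⟩)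
    (hindep : iIndepFun (Sum.elim w (Sum.elim x Δ)) μ) :
    variance
        (fun ω =>
          ∑ i, Real.sign (w i ω) * (Real.sign (x i ω + Δ i ω) - Real.sign (x i ω))) μ
      = n * ((4 / Real.pi) * Real.arctan σ) :=
  variance_fully_binarized_output_change_general μ n σw σ hσw hσ w x Δ hw hx hΔ hindep
end
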